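/- For any matrices U, X ∈ ℝⁿˣʳ with σ_r(X) > 0 (i.e., X has full column rank), one has dist²(U, X) ≤ ‖U·Uᵀ − X·Xᵀ‖_F² / (2·(√2 − 1)·σ_r(X)²), where dist(U, X) = min over orthonormal H ∈ O^{r×r} of ‖UH − X‖_F and σ_r(X) is the r-th largest singular value of X. -/

import Mathlib

/-! Pick an orthogonal `Q` maximizing `tr(Qᵀ Uᵀ X)`; the orthogonal group is compact.
Comparing `Q` with `Q R` for plane rotations and Householder reflections `R` shows that
`W = Qᵀ Uᵀ X` is symmetric positive semidefinite. Put `Δ = UQ - X`, so that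
`UUᵀ = (X + Δ)(X + Δ)ᵀ` and `W = XᵀX + S` with `A = ΔᵀΔ`, `S = ΔᵀX`. Then
`‖UUᵀ - XXᵀ‖² = ‖A + √2 S‖² + (4 - 2√2) tr(AW) + (2√2 - 2) tr(A XᵀX)`,
the first two terms are nonnegative, and
`tr(A XᵀX) ≥ σ_r(X)² ‖Δ‖² ≥ σ_r(X)² dist²(U, X)`. -/

open Matrix

/-- The Frobenius norm of a real matrix. -/
noncomputable def frobNorm {p q : ℕ} (A : Matrix (Fin p) (Fin q) ℝ) : ℝ :=
  Real.sqrt (∑ i, ∑ j, (A i j) ^ 2)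

theorem Matrix.isHermitian_transpose_mul_self {p q : ℕ} (M : Matrix (Fin p) (Fin q) ℝ) :
    (Mᵀ * M).IsHermitian := by
  simpa [Matrix.conjTranspose_eq_transpose_of_trivial] using Matrix.isHermitian_conjTranspose_mul_self M

/-- The `i`-th largest singular value of a real matrix (0-indexed: `sval M 0` is the largest),
defined as the square root of the `i`-th largest eigenvalue of `MᴴM`. -/
noncomputable def sval {p q : ℕ} (M : Matrix (Fin p) (Fin q) ℝ) (i : Fin q) : ℝ :=
  Real.sqrt ((Matrix.isHermitian_transpose_mul_self M).eigenvalues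
    (Tuple.sort (Matrix.isHermitian_transpose_mul_self M).eigenvalues i.rev))

/-- `dist(U, X) = min_{H ∈ O^{r×r}} ‖UH − X‖_F`. -/
noncomputable def distF {n r : ℕ} (U X : Matrix (Fin n) (Fin r) ℝ) : ℝ :=
  sInf ((fun H => frobNorm (U * H - X)) '' {H : Matrix (Fin r) (Fin r) ℝ | Hᵀ * H = 1})

theorem eq_zero_of_forall_mul_add_mul_le {b e : ℝ}
    (h : ∀ c s : ℝ, c ^ 2 + s ^ 2 = 1 → c * b + s * e ≤ b) : e = 0 := by
  by_contra he
  set ρ := √(b ^ 2 + e ^ 2)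
  have hρ2 : ρ ^ 2 = b ^ 2 + e ^ 2 := Real.sq_sqrt (by positivity)
  have hρ : 0 < ρ := Real.sqrt_pos.mpr (by positivity)
  have hunit : (b / ρ) ^ 2 + (e / ρ) ^ 2 = 1 := by
    rw [div_pow, div_pow, ← add_div, ← hρ2, div_self (by positivity)]
  have hle := h (b / ρ) (e / ρ) hunit
  rw [div_mul_eq_mul_div, div_mul_eq_mul_div, ← add_div, div_le_iff₀ hρ] at hle
  nlinarith [sq_pos_of_ne_zero he]

namespace Matrix

section OrthogonalGroup

variable {ι : Type*} [Fintype ι] [DecidableEq ι]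

theorem isCompact_orthogonalGroup :
    IsCompact (orthogonalGroup ι ℝ : Set (Matrix ι ι ℝ)) := by
  have hbox : IsCompact (Set.univ.pi fun _ => Set.univ.pi fun _ => Set.Icc (-1) 1 :
      Set (Matrix ι ι ℝ)) :=
    isCompact_univ_pi fun _ => isCompact_univ_pi fun _ => isCompact_Icc
  refine hbox.of_isClosed_subset (isClosed_unitary (R := Matrix ι ι ℝ)) fun U hU i _ j _ => ?_
  exact abs_le.mp (entry_norm_bound_of_unitary hU i j)

theorem exists_mem_orthogonalGroup_forall_trace_le (M : Matrix ι ι ℝ) :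
    ∃ Q ∈ orthogonalGroup ι ℝ, ∀ R ∈ orthogonalGroup ι ℝ,
      trace (Rᵀ * (Qᵀ * M)) ≤ trace (Qᵀ * M) := by
  have hcont : Continuous fun H : Matrix ι ι ℝ => trace (Hᵀ * M) := by fun_prop
  obtain ⟨Q, hQ, hmax⟩ := isCompact_orthogonalGroup.exists_isMaxOn
    ⟨1, one_mem _⟩ hcont.continuousOn
  refine ⟨Q, hQ, fun R hR => ?_⟩
  simpa only [Set.mem_ofPred_eq, transpose_mul, Matrix.mul_assoc] using hmax (mul_mem hQ hR)

variable {R : Type*} [CommRing R]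

def planeRotation (i j : ι) (c s : R) : Matrix ι ι R :=
  1 + (c - 1) • (single i i 1 + single j j 1) + s • (single j i 1 - single i j 1)

theorem planeRotation_mem_orthogonalGroup {i j : ι} (hij : i ≠ j) {c s : R}
    (hcs : c ^ 2 + s ^ 2 = 1) : planeRotation i j c s ∈ orthogonalGroup ι R := by
  rw [mem_orthogonalGroup_iff']
  simp only [planeRotation, transpose_add, transpose_smul, transpose_sub, transpose_one,
    transpose_single, Matrix.add_mul, Matrix.mul_add, Matrix.sub_mul, Matrix.mul_sub,
    Matrix.smul_mul, Matrix.mul_smul, Matrix.one_mul, single_mul_single_same,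
    single_mul_single_of_ne, hij, hij.symm, Ne, not_false_eq_true, smul_add, smul_sub,
    smul_smul, mul_one]
  match_scalars <;> grind

theorem trace_transpose_planeRotation_mul (i j : ι) (c s : R) (W : Matrix ι ι R) :
    trace ((planeRotation i j c s)ᵀ * W) =
      trace W + (c - 1) * (W i i + W j j) + s * (W j i - W i j) := by
  simp only [planeRotation, smul_add, smul_single, smul_eq_mul, mul_one, transpose_add,
    transpose_one, transpose_single, transpose_smul, transpose_sub, Matrix.add_mul, one_mul,
    Algebra.smul_mul_assoc, Matrix.sub_mul, trace_add, trace_single_mul, trace_smul, trace_sub,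
    add_left_inj, add_right_inj]
  ring

variable {K : Type*} [Field K]

def householder (u : ι → K) : Matrix ι ι K :=
  1 - (2 / (u ⬝ᵥ u)) • vecMulVec u u

theorem householder_mem_orthogonalGroup {u : ι → K} (hu : u ⬝ᵥ u ≠ 0) :
    householder u ∈ orthogonalGroup ι K := by
  rw [mem_orthogonalGroup_iff', householder, transpose_sub, transpose_one, transpose_smul,
    transpose_vecMulVec]
  simp only [Matrix.sub_mul, Matrix.mul_sub, Matrix.smul_mul, Matrix.mul_smul, Matrix.one_mul,
    Matrix.mul_one, vecMulVec_mul_vecMulVec, smul_smul, vecMulVec_smul]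
  match_scalars
  · rfl
  · field_simp
    ring

theorem trace_transpose_householder_mul (u : ι → K) (W : Matrix ι ι K) :
    trace ((householder u)ᵀ * W) = trace W - 2 / (u ⬝ᵥ u) * (u ⬝ᵥ W *ᵥ u) := by
  rw [householder, transpose_sub, transpose_one, transpose_smul, transpose_vecMulVec,
    Matrix.sub_mul, Matrix.one_mul, Matrix.smul_mul, trace_sub, trace_smul, vecMulVec_mul,
    trace_vecMulVec, dotProduct_comm u (u ᵥ* W), ← dotProduct_mulVec, smul_eq_mul]

theorem posSemidef_of_forall_trace_transpose_mul_le {W : Matrix ι ι ℝ}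
    (h : ∀ R ∈ orthogonalGroup ι ℝ, trace (Rᵀ * W) ≤ trace W) : W.PosSemidef := by
  refine .of_dotProduct_mulVec_nonneg ?_ fun u => ?_
  · ext i j
    simp only [conjTranspose_apply, star_trivial]
    rcases eq_or_ne i j with rfl | hij
    · rfl
    refine sub_eq_zero.mp (eq_zero_of_forall_mul_add_mul_le (b := W i i + W j j)
      fun c s hcs => ?_)
    have := h _ (planeRotation_mem_orthogonalGroup hij hcs)
    rw [trace_transpose_planeRotation_mul] at this
    linarith
  · rw [star_trivial]
    rcases eq_or_ne u 0 with rfl | hu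
    · simp
    have hpos : 0 < u ⬝ᵥ u := by simpa using dotProduct_star_self_pos_iff.mpr hu
    have := h _ (householder_mem_orthogonalGroup hpos.ne')
    rw [trace_transpose_householder_mul] at this
    nlinarith [div_pos two_pos hpos]

end OrthogonalGroup

section TraceInequality

variable {m ι : Type*} [Fintype m] [Fintype ι]

open scoped MatrixOrder in
theorem IsHermitian.posSemidef_sub_smul_one_of_le_eigenvalues [DecidableEq ι]
    {A : Matrix ι ι ℝ} (hA : A.IsHermitian) {c : ℝ} (hc : ∀ i, c ≤ hA.eigenvalues i) :
    (A - c • 1).PosSemidef := by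
  have hle := (algebraMap_le_iff_le_spectrum (R := ℝ) (a := A) (r := c) hA.isSelfAdjoint).mpr
  rw [hA.spectrum_real_eq_range_eigenvalues, Set.forall_mem_range] at hle
  simpa [Matrix.le_iff, Algebra.algebraMap_eq_smul_one] using hle hc

theorem PosSemidef.trace_transpose_mul_self_mul_nonneg {P : Matrix ι ι ℝ}
    (hP : P.PosSemidef) (B : Matrix m ι ℝ) : 0 ≤ trace (Bᵀ * B * P) := by
  rw [Matrix.mul_assoc, trace_mul_comm, ← conjTranspose_eq_transpose_of_trivial]
  exact (hP.mul_mul_conjTranspose_same B).trace_nonneg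

theorem trace_transpose_mul_self_add_mul_transpose_sub (X Δ : Matrix m ι ℝ)
    (hS : (Δᵀ * X)ᵀ = Δᵀ * X) :
    trace (((X + Δ) * (X + Δ)ᵀ - X * Xᵀ)ᵀ * ((X + Δ) * (X + Δ)ᵀ - X * Xᵀ)) =
      trace (Δᵀ * Δ * (Δᵀ * Δ)) + 2 * trace (Δᵀ * X * (Δᵀ * X)) +
        4 * trace (Δᵀ * Δ * (Δᵀ * X)) + 2 * trace (Δᵀ * Δ * (Xᵀ * X)) := by
  have hD : (X + Δ) * (X + Δ)ᵀ - X * Xᵀ = Δ * Xᵀ + X * Δᵀ + Δ * Δᵀ := by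
    simp only [transpose_add, Matrix.add_mul, Matrix.mul_add]
    abel
  have hXΔ : Xᵀ * Δ = Δᵀ * X := by rw [← hS, transpose_mul, transpose_transpose]
  have cyc : ∀ A B C E : Matrix m ι ℝ,
      trace (A * Bᵀ * (C * Eᵀ)) = trace (Eᵀ * A * (Bᵀ * C)) := fun A B C E => by
      simp only [← Matrix.mul_assoc]
      rw [trace_mul_cycle]
      simp only [Matrix.mul_assoc]
  rw [hD]
  simp only [transpose_add, transpose_mul, transpose_transpose, Matrix.add_mul, Matrix.mul_add,
    trace_add, cyc, hXΔ]
  rw [trace_mul_comm (Δᵀ * X) (Δᵀ * Δ), trace_mul_comm (Xᵀ * X) (Δᵀ * Δ)]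
  ring

theorem two_mul_sqrt_two_sub_one_mul_trace_le [DecidableEq ι] (X Δ : Matrix m ι ℝ) {c : ℝ}
    (hW : ((X + Δ)ᵀ * X).PosSemidef) (hX : (Xᵀ * X - c • 1).PosSemidef) :
    2 * (√2 - 1) * c * trace (Δᵀ * Δ) ≤
      trace (((X + Δ) * (X + Δ)ᵀ - X * Xᵀ)ᵀ * ((X + Δ) * (X + Δ)ᵀ - X * Xᵀ)) := by
  have hWS : (X + Δ)ᵀ * X = Xᵀ * X + Δᵀ * X := by rw [transpose_add, Matrix.add_mul]
  have hS : (Δᵀ * X)ᵀ = Δᵀ * X := by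
    have := hW.isHermitian.eq
    rw [conjTranspose_eq_transpose_of_trivial, hWS, transpose_add, transpose_mul Xᵀ X,
      transpose_transpose] at this
    exact add_left_cancel this
  have hA : (Δᵀ * Δ)ᵀ = Δᵀ * Δ := by rw [transpose_mul, transpose_transpose]
  have hsq :
      0 ≤ trace ((Δᵀ * Δ + √2 • (Δᵀ * X))ᵀ * (Δᵀ * Δ + √2 • (Δᵀ * X))) := by
    rw [← conjTranspose_eq_transpose_of_trivial]
    exact (posSemidef_conjTranspose_mul_self _).trace_nonneg
  rw [transpose_add, transpose_smul, hA, hS] at hsq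
  simp only [Matrix.add_mul, Matrix.mul_add, Matrix.smul_mul, Matrix.mul_smul,
    trace_add, trace_smul, smul_eq_mul, trace_mul_comm (Δᵀ * X) (Δᵀ * Δ)] at hsq
  rw [mul_add, ← mul_assoc √2 √2, Real.mul_self_sqrt zero_le_two] at hsq
  have hAW := hW.trace_transpose_mul_self_mul_nonneg Δ
  have hAG := hX.trace_transpose_mul_self_mul_nonneg Δ
  rw [hWS, Matrix.mul_add, trace_add] at hAW
  rw [Matrix.mul_sub, Matrix.mul_smul, Matrix.mul_one, trace_sub, trace_smul, smul_eq_mul] at hAG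
  have h₁ := Real.one_lt_sqrt_two
  have h₂ := Real.sqrt_two_lt_three_halves
  rw [trace_transpose_mul_self_add_mul_transpose_sub X Δ hS]
  nlinarith [mul_nonneg (by linarith : (0 : ℝ) ≤ 4 - 2 * √2) hAW,
    mul_nonneg (by linarith : (0 : ℝ) ≤ 2 * √2 - 2) hAG]

end TraceInequality

end Matrix

theorem sval_last_sq_le_eigenvalues {n r : ℕ} (hr : 0 < r) (X : Matrix (Fin n) (Fin r) ℝ)
    (i : Fin r) :
    sval X ⟨r - 1, Nat.sub_one_lt_of_lt hr⟩ ^ 2 ≤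
      (isHermitian_transpose_mul_self X).eigenvalues i := by
  have hXX : (Xᵀ * X).PosSemidef := by
    simpa only [conjTranspose_eq_transpose_of_trivial] using posSemidef_conjTranspose_mul_self X
  have hrev : Fin.rev ⟨r - 1, Nat.sub_one_lt_of_lt hr⟩ = (⟨0, hr⟩ : Fin r) :=
    Fin.ext (by simp only [Fin.val_rev]; omega)
  rw [sval, hrev, Real.sq_sqrt (hXX.eigenvalues_nonneg _)]
  obtain ⟨k, rfl⟩ := (Tuple.sort (isHermitian_transpose_mul_self X).eigenvalues).surjective i
  exact Tuple.monotone_sort (isHermitian_transpose_mul_self X).eigenvalues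
    (show (⟨0, hr⟩ : Fin r) ≤ k from Nat.zero_le _)

theorem frobNorm_sq {p q : ℕ} (A : Matrix (Fin p) (Fin q) ℝ) :
    frobNorm A ^ 2 = trace (Aᵀ * A) := by
  rw [frobNorm, Real.sq_sqrt (by positivity), Finset.sum_comm]
  simp only [trace, diag_apply, mul_apply, transpose_apply, sq]

theorem distF_sq_le {n r : ℕ} (U X : Matrix (Fin n) (Fin r) ℝ) {H : Matrix (Fin r) (Fin r) ℝ}
    (hH : Hᵀ * H = 1) : distF U X ^ 2 ≤ frobNorm (U * H - X) ^ 2 := by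
  set S := (fun G => frobNorm (U * G - X)) '' {G : Matrix (Fin r) (Fin r) ℝ | Gᵀ * G = 1}
  have hnonneg : 0 ∈ lowerBounds S := Set.forall_mem_image.mpr fun _ _ => Real.sqrt_nonneg _
  have hmem : frobNorm (U * H - X) ∈ S := Set.mem_image_of_mem _ hH
  exact pow_le_pow_left₀ (le_csInf ⟨_, hmem⟩ hnonneg) (csInf_le ⟨0, hnonneg⟩ hmem) 2

/-- **Controlling the factor distance by the matrix distance.**
For any `U, X ∈ ℝ^{n×r}` with `σ_r(X) > 0` (full column rank),
`dist²(U, X) ≤ ‖UUᵀ − XXᵀ‖_F² / (2(√2 − 1) σ_r(X)²)`. -/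
theorem dist_factor_le_dist_matrix
    (n r : ℕ) (hr : 0 < r)
    (U X : Matrix (Fin n) (Fin r) ℝ)
    (hσ : 0 < sval X ⟨r - 1, by omega⟩) :
    distF U X ^ 2 ≤
      frobNorm (U * Uᵀ - X * Xᵀ) ^ 2 /
        (2 * (Real.sqrt 2 - 1) * sval X ⟨r - 1, by omega⟩ ^ 2) := by
  obtain ⟨Q, hQ, hmax⟩ := exists_mem_orthogonalGroup_forall_trace_le (Uᵀ * X)
  set Δ := U * Q - X
  have hUQ : U * Q = X + Δ := (add_sub_cancel X (U * Q)).symm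
  have hUU : U * Uᵀ = (X + Δ) * (X + Δ)ᵀ := by
    rw [← hUQ, transpose_mul, Matrix.mul_assoc, ← Matrix.mul_assoc Q,
      (mem_orthogonalGroup_iff _ _).mp hQ, Matrix.one_mul]
  have hW : ((X + Δ)ᵀ * X).PosSemidef := by
    rw [← hUQ, transpose_mul, Matrix.mul_assoc]
    exact posSemidef_of_forall_trace_transpose_mul_le hmax
  have hX := (isHermitian_transpose_mul_self X).posSemidef_sub_smul_one_of_le_eigenvalues
    (sval_last_sq_le_eigenvalues hr X)
  have hdist : distF U X ^ 2 ≤ trace (Δᵀ * Δ) :=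
    frobNorm_sq Δ ▸ distF_sq_le U X ((mem_orthogonalGroup_iff' _ _).mp hQ)
  have hsqrt2 : 0 < √2 - 1 := sub_pos.mpr Real.one_lt_sqrt_two
  rw [le_div_iff₀ (by positivity), frobNorm_sq, hUU]
  calc distF U X ^ 2 * (2 * (√2 - 1) * sval X ⟨r - 1, by omega⟩ ^ 2)
      ≤ 2 * (√2 - 1) * sval X ⟨r - 1, by omega⟩ ^ 2 * trace (Δᵀ * Δ) := by
        rw [mul_comm]; gcongr
    _ ≤ _ := two_mul_sqrt_two_sub_one_mul_trace_le X Δ hW hX
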